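/- arXiv:1910.00644 — 5 statements merged into one kernel-verified Lean document; each statement's English description precedes it below -/
import Mathlib

section
/- Let G be a finite almost simple group with socle G₀ (i.e. G₀ is a nonabelian simple normal subgroup of G whose centralizer in G is trivial). Suppose G = HK is an exact factorization, i.e. H and K are subgroups of G with H ∩ K = 1 and every element of G is a product hk with h ∈ H and k ∈ K. Then the order of H ∩ G₀ divides the index of K ∩ G₀ in G₀. -/
/-!
`H ∩ G₀` acts by left multiplication on the cosets of `K ∩ G₀` in `G₀`, and this action is free:
if `a ∈ H` fixes `g (K ∩ G₀)`, write `g = hk` with `h ∈ H`, `k ∈ K`; then `h⁻¹ a h` lies in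
`H ∩ K = 1`, so `a = 1`. All orbits of a free action have the size of the acting group.
-/

theorem MulAction.card_dvd_card_of_stabilizer_eq_bot {α β : Type*} [Group α] [MulAction α β]
    (h : ∀ b : β, stabilizer α b = ⊥) : Nat.card α ∣ Nat.card β := by
  rw [Nat.card_congr (selfEquivOrbitsQuotientProd h), Nat.card_prod]
  exact dvd_mul_left _ _

namespace Subgroup

variable {G : Type*} [Group G]

theorem card_dvd_index_of_conj_mem_eq_one {H K : Subgroup G}
    (hHK : ∀ a ∈ H, ∀ g : G, g⁻¹ * a * g ∈ K → a = 1) : Nat.card H ∣ K.index := by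
  refine MulAction.card_dvd_card_of_stabilizer_eq_bot (α := H) (β := G ⧸ K) fun x => ?_
  induction x using QuotientGroup.induction_on with
  | H g =>
    refine eq_bot_iff.mpr fun a ha => mem_bot.mpr (Subtype.ext (hHK a a.2 g ?_))
    have hfix : (g : G ⧸ K) = ((a : G) * g : G) := (MulAction.mem_stabilizer_iff.mp ha).symm
    simpa [mul_assoc] using QuotientGroup.eq.mp hfix

theorem eq_one_of_conj_mem_of_exact_factorization {H K : Subgroup G} (hdisj : H ⊓ K = ⊥)
    (hfact : ∀ g : G, ∃ h ∈ H, ∃ k ∈ K, g = h * k) {a g : G} (ha : a ∈ H)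
    (hag : g⁻¹ * a * g ∈ K) : a = 1 := by
  obtain ⟨h, hh, k, hk, rfl⟩ := hfact g
  have hconj : h⁻¹ * a * h = k * ((h * k)⁻¹ * a * (h * k)) * k⁻¹ := by group
  have hmem : h⁻¹ * a * h ∈ H ⊓ K :=
    ⟨H.mul_mem (H.mul_mem (H.inv_mem hh) ha) hh,
      hconj ▸ K.mul_mem (K.mul_mem hk hag) (K.inv_mem hk)⟩
  rw [hdisj, mem_bot] at hmem
  calc a = h * (h⁻¹ * a * h) * h⁻¹ := by group
    _ = 1 := by rw [hmem]; group

end Subgroup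

theorem card_inf_dvd_index_of_exact_factorization_general {G : Type*} [Group G]
    (G₀ H K : Subgroup G)
    (hdisj : H ⊓ K = ⊥)
    (hfact : ∀ g : G, ∃ h ∈ H, ∃ k ∈ K, g = h * k) :
    Nat.card ↥(H ⊓ G₀) ∣ ((K ⊓ G₀).subgroupOf G₀).index := by
  rw [← Nat.card_congr (Subgroup.subgroupOfEquivOfLe (inf_le_right : H ⊓ G₀ ≤ G₀)).toEquiv]
  refine Subgroup.card_dvd_index_of_conj_mem_eq_one fun a ha g hg => Subtype.ext ?_
  exact Subgroup.eq_one_of_conj_mem_of_exact_factorization hdisj hfact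
    (Subgroup.mem_subgroupOf.mp ha).1 (Subgroup.mem_subgroupOf.mp hg).1

/-- Let `G` be a finite almost simple group with socle `G₀` (a nonabelian simple
normal subgroup with trivial centralizer in `G`). If `G = HK` is an exact
factorization, then `|H ∩ G₀|` divides the index of `K ∩ G₀` in `G₀`. -/
theorem card_inf_dvd_index_of_exact_factorization {G : Type*} [Group G] [Finite G]
    (G₀ H K : Subgroup G) (hnorm : G₀.Normal) (hsimple : IsSimpleGroup G₀)
    (hnonabelian : ¬ ∀ x y : G₀, x * y = y * x)
    (hcent : Subgroup.centralizer (G₀ : Set G) = ⊥)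
    (hdisj : H ⊓ K = ⊥)
    (hfact : ∀ g : G, ∃ h ∈ H, ∃ k ∈ K, g = h * k) :
    Nat.card ↥(H ⊓ G₀) ∣ ((K ⊓ G₀).subgroupOf G₀).index :=
  card_inf_dvd_index_of_exact_factorization_general G₀ H K hdisj hfact
end

section
/- Let F be a finite field with q elements, let n ≥ 2, and fix a nonzero vector v ∈ F^n. Suppose H and K are subgroups of GL_n(F) such that every element of GL_n(F) is a product hk with h ∈ H, k ∈ K, and such that every element of K maps v into the F-span of v (i.e. K is contained in the stabilizer of the line through v). Then (q^n − 1)/(q − 1) divides the order of H. -/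
/-!
`GLₙ(q)` is transitive on the lines of `Fⁿ`, and as `K` fixes the line `⟨v⟩`, every line is
`hk⟨v⟩ = h⟨v⟩` for some `h ∈ H`. So `H` is transitive on the `(qⁿ - 1)/(q - 1)` lines, and their
number is the index in `H` of a point stabilizer.
-/

open scoped LinearAlgebra.Projectivization
open MulAction Projectivization

theorem MulAction.isPretransitive_of_forall_eq_mul_of_le_stabilizer {G X : Type*} [Group G]
    [MulAction G X] [IsPretransitive G X] {H K : Subgroup G} {x : X}
    (hfact : ∀ g : G, ∃ h ∈ H, ∃ k ∈ K, g = h * k) (hK : K ≤ stabilizer G x) :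
    IsPretransitive H X := by
  refine (isPretransitive_iff_base x).2 fun y ↦ ?_
  obtain ⟨g, rfl⟩ := exists_smul_eq G x y
  obtain ⟨h, hh, k, hk, rfl⟩ := hfact g
  exact ⟨⟨h, hh⟩, by rw [mul_smul, hK hk]; rfl⟩

theorem MulAction.card_dvd_card_of_isPretransitive (G : Type*) {X : Type*} [Group G]
    [MulAction G X] [IsPretransitive G X] (x : X) : Nat.card X ∣ Nat.card G :=
  index_stabilizer_of_transitive G x ▸ (stabilizer G x).index_dvd_card

namespace Projectivization

theorem smul_mk_eq_self_of_smul_mem_span {G K V : Type*} [Group G] [DivisionRing K]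
    [AddCommGroup V] [Module K V] [DistribMulAction G V] [SMulCommClass G K V] {g : G} {v : V}
    (hv : v ≠ 0) (hg : g • v ∈ K ∙ v) : g • mk K v hv = mk K v hv := by
  obtain ⟨a, ha⟩ := Submodule.mem_span_singleton.1 hg
  rw [smul_mk, mk_eq_mk_iff']
  exact ⟨a, ha⟩

instance isPretransitive_matrixGeneralLinearGroup {ι K : Type*} [Fintype ι] [DecidableEq ι]
    [Field K] : IsPretransitive (GL ι K) (ℙ K (ι → K)) := by
  let f : ℙ K (ι → K) →ₑ[(Matrix.GeneralLinearGroup.toLin : GL ι K ≃* _)] ℙ K (ι → K) :=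
    { toFun := id
      map_smul' g x := by
        induction x using ind with
        | h v hv => simp [Units.smul_def] }
  exact (isPretransitive_congr Matrix.GeneralLinearGroup.toLin.surjective (f := f)
    Function.bijective_id).2 isPretransitive_of_is_two_pretransitive

theorem card_fin_fun (F : Type*) [Field F] [Finite F] (n : ℕ) :
    Nat.card (ℙ F (Fin n → F)) = (Nat.card F ^ n - 1) / (Nat.card F - 1) := by
  rw [card'', Nat.card_fun, Nat.card_fin]

end Projectivization

theorem lines_dvd_card_of_factorization_general {F : Type*} [Field F] [Fintype F]
    (q n : ℕ) (hq : Fintype.card F = q)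
    (v : Fin n → F) (hv : v ≠ 0)
    (H K : Subgroup (Matrix.GeneralLinearGroup (Fin n) F))
    (hfact : ∀ g : Matrix.GeneralLinearGroup (Fin n) F,
      ∃ h ∈ H, ∃ k ∈ K, g = h * k)
    (hK : ∀ k ∈ K, (k : Matrix (Fin n) (Fin n) F).mulVec v ∈ Submodule.span F {v}) :
    (q ^ n - 1) / (q - 1) ∣ Nat.card H := by
  have hK_fix : K ≤ stabilizer _ (mk F v hv) := fun k hk ↦
    smul_mk_eq_self_of_smul_mem_span hv (hK k hk)
  have := isPretransitive_of_forall_eq_mul_of_le_stabilizer hfact hK_fix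
  rw [← hq, ← Nat.card_eq_fintype_card, ← card_fin_fun]
  exact card_dvd_card_of_isPretransitive H (mk F v hv)

/-- In a factorization `GLₙ(q) = HK` in which `K` stabilizes the line spanned by
a nonzero vector `v`, the number `(qⁿ - 1)/(q - 1)` of lines divides `|H|`. -/
theorem lines_dvd_card_of_factorization {F : Type*} [Field F] [Fintype F]
    (q n : ℕ) (hq : Fintype.card F = q) (hn : 2 ≤ n)
    (v : Fin n → F) (hv : v ≠ 0)
    (H K : Subgroup (Matrix.GeneralLinearGroup (Fin n) F))
    (hfact : ∀ g : Matrix.GeneralLinearGroup (Fin n) F,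
      ∃ h ∈ H, ∃ k ∈ K, g = h * k)
    (hK : ∀ k ∈ K, (k : Matrix (Fin n) (Fin n) F).mulVec v ∈ Submodule.span F {v}) :
    (q ^ n - 1) / (q - 1) ∣ Nat.card H :=
  lines_dvd_card_of_factorization_general q n hq v hv H K hfact hK
end

section
/- Let K ⊆ L be finite fields with |K| = q and [L : K] = m ≥ 2, and suppose there exists a primitive prime divisor r of q^m − 1, i.e. a prime r dividing q^m − 1 such that r does not divide q^i − 1 for 1 ≤ i < m. Let G = Lˣ ⋊ Gal(L/K) be the semidirect product of the unit group Lˣ by the Galois group Gal(L/K) (with its natural action on Lˣ), acting on L by (a, σ)·x = a·σ(x). If A is a nilpotent subgroup of G which is transitive on L \ {0} (i.e. for all nonzero x, y ∈ L there exists (a, σ) ∈ A with a·σ(x) = y), then A equals the subgroup Lˣ (the image of Lˣ under the canonical inclusion into G); in particular A is cyclic of order q^m − 1. -/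
/-- The natural action of the Galois group `Gal(L/K)` on the unit group `Lˣ`. -/
def galUnitsHom (K L : Type*) [Field K] [Field L] [Algebra K L] :
    (L ≃ₐ[K] L) →* MulAut Lˣ where
  toFun σ := Units.mapEquiv σ.toRingEquiv.toMulEquiv
  map_one' := by ext u; rfl
  map_mul' σ τ := by ext u; rfl

/-!
Transitivity makes `g ↦ g.left` map `A` onto `Lˣ`, so `q ^ m - 1` divides `|A|` and `A` contains
an element `g` of order `r`. As `q` has order `m` modulo `r`, `m ∣ r - 1`, so `r` is prime to
`|Gal(L/K)| = m` and `g` lies in `Lˣ`. In the nilpotent group `A`, the `r'`-part of any `w ∈ A`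
commutes with `g`, so its Galois part fixes `g`; an element of order `r` lies in no proper subfield
of `L` (primitivity of `r`), so that Galois part is trivial, hence so is the Galois part of `w`.
Thus `A ≤ Lˣ`, and surjectivity onto `Lˣ` gives equality.
-/

open Module
open scoped commutatorElement

theorem commutatorElement_pow_orderOf_eq_one {G : Type*} [Group G] {x y : G}
    (h : ⁅x, y⁆ ∈ Subgroup.center G) : ⁅x, y⁆ ^ orderOf y = 1 := by
  have hconj : x * y * x⁻¹ = ⁅x, y⁆ * y := by rw [commutatorElement_def]; group
  have hcomm : Commute ⁅x, y⁆ y := (Subgroup.mem_center_iff.mp h y).symm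
  calc ⁅x, y⁆ ^ orderOf y = (⁅x, y⁆ * y) ^ orderOf y := by
        rw [hcomm.mul_pow, pow_orderOf_eq_one, mul_one]
    _ = x * y ^ orderOf y * x⁻¹ := by rw [← hconj, conj_pow]
    _ = 1 := by rw [pow_orderOf_eq_one, mul_one, mul_inv_cancel]

theorem Group.IsNilpotent.commute_of_coprime_orderOf {G : Type*} [Group G] [Group.IsNilpotent G]
    {x y : G} (h : (orderOf x).Coprime (orderOf y)) : Commute x y := by
  suffices ∀ x y : G, (orderOf x).Coprime (orderOf y) → Commute x y from this x y h
  refine nilpotent_center_quotient_ind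
    (P := fun G _ _ => ∀ x y : G, (orderOf x).Coprime (orderOf y) → Commute x y) G ?_ ?_
  · intro G _ _ x y _
    exact Subsingleton.elim _ _
  · intro G _ _ ih x y h
    let π := QuotientGroup.mk' (Subgroup.center G)
    have hπ : Commute (π x) (π y) := ih _ _
      ((h.coprime_dvd_left (orderOf_map_dvd π x)).coprime_dvd_right (orderOf_map_dvd π y))
    have hxy : ⁅x, y⁆ ∈ Subgroup.center G := by
      rw [← QuotientGroup.ker_mk' (Subgroup.center G), MonoidHom.mem_ker, map_commutatorElement,
        commutatorElement_eq_one_iff_commute]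
      exact hπ
    have hyx : ⁅y, x⁆ ∈ Subgroup.center G := by
      rw [← commutatorElement_inv]; exact inv_mem hxy
    have hx : ⁅x, y⁆ ^ orderOf x = 1 := by
      rw [← inv_inj, ← inv_pow, commutatorElement_inv, inv_one,
        commutatorElement_pow_orderOf_eq_one hyx]
    have hord : orderOf ⁅x, y⁆ ∣ Nat.gcd (orderOf x) (orderOf y) :=
      Nat.dvd_gcd (orderOf_dvd_of_pow_eq_one hx)
        (orderOf_dvd_of_pow_eq_one (commutatorElement_pow_orderOf_eq_one hxy))
    rwa [h.gcd_eq_one, Nat.dvd_one, orderOf_eq_one_iff, commutatorElement_eq_one_iff_commute]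
      at hord

theorem Group.IsNilpotent.commute_pow_ordProj {G : Type*} [Group G] [Group.IsNilpotent G]
    [Finite G] {p : ℕ} (hp : p.Prime) (x : G) {y : G} (hy : orderOf y = p) :
    Commute (x ^ ordProj[p] (Nat.card G)) y := by
  refine Group.IsNilpotent.commute_of_coprime_orderOf ?_
  have hx : (x ^ ordProj[p] (Nat.card G)) ^ ordCompl[p] (Nat.card G) = 1 := by
    rw [← pow_mul, Nat.ordProj_mul_ordCompl_eq_self, pow_card_eq_one']
  rw [hy]
  exact ((Nat.coprime_ordCompl hp Nat.card_pos.ne').coprime_dvd_right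
    (orderOf_dvd_of_pow_eq_one hx)).symm

theorem eq_one_of_pow_eq_one_of_coprime_natCard {G : Type*} [Group G] {x : G} {n : ℕ}
    (hn : (Nat.card G).Coprime n) (hx : x ^ n = 1) : x = 1 :=
  hn.pow_left_bijective.injective (by simp [hx])

theorem dvd_sub_one_of_primitive_prime_divisor {q m r : ℕ} (hr : r.Prime) (hq : 0 < q)
    (hm : 0 < m) (hrdvd : r ∣ q ^ m - 1) (hppd : ∀ i : ℕ, 1 ≤ i → i < m → ¬ r ∣ q ^ i - 1) :
    m ∣ r - 1 := by
  have := Fact.mk hr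
  have hdvd_iff (i : ℕ) : r ∣ q ^ i - 1 ↔ (q : ZMod r) ^ i = 1 := by
    rw [← ZMod.natCast_eq_zero_iff, Nat.cast_sub (Nat.one_le_pow _ _ hq), sub_eq_zero]
    push_cast; rfl
  have hpow := (hdvd_iff m).1 hrdvd
  have hord : orderOf (q : ZMod r) = m := (orderOf_eq_iff hm).2
    ⟨hpow, fun i hi hi0 h => hppd i hi0 hi ((hdvd_iff i).2 h)⟩
  refine hord ▸ ZMod.orderOf_dvd_card_sub_one fun h0 => ?_
  rw [h0, zero_pow hm.ne'] at hpow
  exact zero_ne_one hpow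

theorem FiniteField.exists_lt_finrank_apply_eq_pow_card_pow {K L : Type*} [Field K]
    [Fintype K] [Field L] [Finite L] [Algebra K L] (σ : L ≃ₐ[K] L) :
    ∃ n < finrank K L, ∀ x : L, σ x = x ^ (Fintype.card K ^ n) := by
  obtain ⟨n, rfl⟩ := (bijective_frobeniusAlgEquivOfAlgebraic_pow K L).2 σ
  refine ⟨n, n.2, fun x => ?_⟩
  rw [AlgEquiv.coe_pow, coe_frobeniusAlgEquivOfAlgebraic_iterate]

theorem AlgEquiv.eq_one_of_apply_eq_of_orderOf_eq {K L : Type*} [Field K] [Fintype K]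
    [Field L] [Finite L] [Algebra K L] {r : ℕ}
    (hppd : ∀ i : ℕ, 1 ≤ i → i < finrank K L → ¬ r ∣ Fintype.card K ^ i - 1)
    {v : Lˣ} (hv : orderOf v = r) {σ : L ≃ₐ[K] L} (hσ : σ v = v) : σ = 1 := by
  obtain ⟨n, hn, hσpow⟩ := FiniteField.exists_lt_finrank_apply_eq_pow_card_pow σ
  rcases Nat.eq_zero_or_pos n with rfl | hn0
  · ext x; simp [hσpow]
  refine absurd (hv ▸ orderOf_dvd_of_pow_eq_one ?_) (hppd n hn0 hn)
  rw [hσpow, ← Units.val_pow_eq_pow_val, Units.val_inj] at hσ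
  rwa [← mul_eq_right, pow_sub_one_mul (pow_ne_zero n Fintype.card_ne_zero)]

namespace SemidirectProduct

variable {N G : Type*} [Group N] [Group G] {φ : G →* MulAut N}

instance [Finite N] [Finite G] : Finite (N ⋊[φ] G) := Finite.of_equiv _ equivProd.symm

theorem right_pow (w : N ⋊[φ] G) (n : ℕ) : (w ^ n).right = w.right ^ n :=
  map_pow rightHom w n

theorem commute_inl_iff {N : Type*} [CommGroup N] {φ : G →* MulAut N} {w : N ⋊[φ] G} {n : N} :
    Commute w (inl n) ↔ φ w.right n = n := by
  rw [Commute, SemiconjBy, SemidirectProduct.ext_iff]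
  simp only [mul_left, left_inl, right_inl, map_one, MulAut.one_apply, mul_right, mul_one,
    one_mul, and_true]
  rw [mul_comm n, mul_right_inj]

/-- The action of `N ⋊[φ] G` on the cosets `(N ⋊[φ] G) ⧸ G`, identified with `N`. -/
instance : MulAction (N ⋊[φ] G) N where
  smul w n := w.left * φ w.right n
  one_smul n := by
    change (1 : N) * φ 1 n = n
    rw [map_one, MulAut.one_apply, one_mul]
  mul_smul a b n := by
    change (a * b).left * φ (a * b).right n = a.left * φ a.right (b.left * φ b.right n)
    rw [mul_left, mul_right, map_mul, map_mul, MulAut.mul_apply, mul_assoc]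

theorem smul_one_eq_left (w : N ⋊[φ] G) : w • (1 : N) = w.left := by
  change w.left * φ w.right 1 = w.left
  rw [map_one, mul_one]

theorem natCard_dvd_of_surjective_left (A : Subgroup (N ⋊[φ] G)) [Finite A]
    (h : Function.Surjective fun w : A => (w : N ⋊[φ] G).left) : Nat.card N ∣ Nat.card A := by
  have : MulAction.IsPretransitive A N := (MulAction.isPretransitive_iff_base 1).2 fun n => by
    obtain ⟨w, rfl⟩ := h n
    exact ⟨w, smul_one_eq_left (w : N ⋊[φ] G)⟩
  rw [← MulAction.index_stabilizer_of_transitive A (1 : N)]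
  exact Subgroup.index_dvd_card _

theorem eq_range_inl_of_surjective_left (A : Subgroup (N ⋊[φ] G))
    (hright : ∀ w ∈ A, w.right = 1)
    (hleft : Function.Surjective fun w : A => (w : N ⋊[φ] G).left) :
    A = inl.range := by
  have hinl : ∀ w ∈ A, inl w.left = w := fun w hw => by
    ext <;> simp [hright w hw]
  refine le_antisymm (fun w hw => ⟨w.left, hinl w hw⟩) ?_
  rintro _ ⟨n, rfl⟩
  obtain ⟨⟨w, hw⟩, rfl⟩ := hleft n
  simpa [hinl w hw] using hw

end SemidirectProduct

open SemidirectProduct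

theorem galUnitsHom_right_eq_one_of_isNilpotent {K L : Type*} [Field K] [Fintype K] [Field L]
    [Finite L] [Algebra K L] (A : Subgroup (Lˣ ⋊[galUnitsHom K L] (L ≃ₐ[K] L)))
    [Group.IsNilpotent A]
    {r : ℕ} (hr : r.Prime) (hcop : (Nat.card (L ≃ₐ[K] L)).Coprime r)
    (hppd : ∀ i : ℕ, 1 ≤ i → i < finrank K L → ¬ r ∣ Fintype.card K ^ i - 1)
    (hrA : r ∣ Nat.card A) {w : Lˣ ⋊[galUnitsHom K L] (L ≃ₐ[K] L)} (hw : w ∈ A) :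
    w.right = 1 := by
  have := Fact.mk hr
  obtain ⟨g, hg⟩ := exists_prime_orderOf_dvd_card' r hrA
  have hg_right : (g : Lˣ ⋊[galUnitsHom K L] (L ≃ₐ[K] L)).right = 1 :=
    eq_one_of_pow_eq_one_of_coprime_natCard hcop <| by
      rw [← right_pow, ← hg, ← Subgroup.orderOf_coe, pow_orderOf_eq_one, one_right]
  set v := (g : Lˣ ⋊[galUnitsHom K L] (L ≃ₐ[K] L)).left
  have hg_inl : inl v = (g : Lˣ ⋊[galUnitsHom K L] (L ≃ₐ[K] L)) := by
    ext <;> simp [v, hg_right]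
  have hv : orderOf v = r := by
    rw [← orderOf_injective _ (inl_injective (φ := galUnitsHom K L)) v, hg_inl,
      Subgroup.orderOf_coe, hg]
  have hcomm : Commute (w ^ ordProj[r] (Nat.card A)) (inl v) := by
    rw [hg_inl]
    exact (Group.IsNilpotent.commute_pow_ordProj hr ⟨w, hw⟩ hg).map A.subtype
  have hfix : (w ^ ordProj[r] (Nat.card A)).right = 1 :=
    AlgEquiv.eq_one_of_apply_eq_of_orderOf_eq hppd hv
      (congrArg Units.val (commute_inl_iff.1 hcomm))
  exact eq_one_of_pow_eq_one_of_coprime_natCard (hcop.pow_right _) (by rw [← right_pow, hfix])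

theorem nilpotent_transitive_eq_units_general {K L : Type*} [Field K] [Field L]
    [Algebra K L] [Fintype K] [Fintype L] (q m r : ℕ)
    (hq : Fintype.card K = q) (hm : Module.finrank K L = m)
    (hr : r.Prime) (hrdvd : r ∣ q ^ m - 1)
    (hppd : ∀ i : ℕ, 1 ≤ i → i < m → ¬ r ∣ q ^ i - 1)
    (A : Subgroup (Lˣ ⋊[galUnitsHom K L] (L ≃ₐ[K] L)))
    (hnilp : Group.IsNilpotent ↥A)
    (htrans : ∀ x y : L, x ≠ 0 → y ≠ 0 →
      ∃ g ∈ A, (g.left : L) * g.right x = y) :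
    A = (SemidirectProduct.inl :
          Lˣ →* Lˣ ⋊[galUnitsHom K L] (L ≃ₐ[K] L)).range ∧
    IsCyclic ↥A ∧ Nat.card ↥A = q ^ m - 1 := by
  subst hq hm
  have hleft : Function.Surjective fun g : A => (g : Lˣ ⋊[galUnitsHom K L] (L ≃ₐ[K] L)).left :=
    fun u => by
      obtain ⟨g, hg, hgu⟩ := htrans 1 u one_ne_zero u.ne_zero
      exact ⟨⟨g, hg⟩, Units.ext (by simpa using hgu)⟩
  have hcard : Nat.card Lˣ = Fintype.card K ^ finrank K L - 1 := by
    rw [Nat.card_units, Module.natCard_eq_pow_finrank (K := K), Nat.card_eq_fintype_card]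
  have hcop : (Nat.card (L ≃ₐ[K] L)).Coprime r := by
    rw [IsGalois.card_aut_eq_finrank]
    exact ((Nat.coprime_self_sub_left hr.one_le).2 (Nat.coprime_one_left r)).coprime_dvd_left
      (dvd_sub_one_of_primitive_prime_divisor hr Fintype.card_pos finrank_pos hrdvd hppd)
  have hrA : r ∣ Nat.card A := hrdvd.trans (hcard ▸ natCard_dvd_of_surjective_left A hleft)
  have hA := eq_range_inl_of_surjective_left A
    (fun _ hw => galUnitsHom_right_eq_one_of_isNilpotent A hr hcop hppd hrA hw) hleft
  refine ⟨hA, ?_, ?_⟩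
  · rw [hA]
    exact isCyclic_of_surjective _ inl.rangeRestrict_surjective
  · rw [hA, ← hcard]
    exact Nat.card_congr (MonoidHom.ofInjective inl_injective).toEquiv.symm

/-- Lemma 6.2, main case: if `L/K` is a degree-`m ≥ 2` extension of finite
fields with `|K| = q`, `q^m - 1` has a primitive prime divisor, and `A` is a
nilpotent subgroup of `ΓL₁(qᵐ) = Lˣ ⋊ Gal(L/K)` transitive on `L \ {0}`, then
`A = Lˣ`; in particular `A` is cyclic of order `qᵐ - 1`. -/
theorem nilpotent_transitive_eq_units {K L : Type*} [Field K] [Field L]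
    [Algebra K L] [Fintype K] [Fintype L] (q m r : ℕ)
    (hq : Fintype.card K = q) (hm : Module.finrank K L = m) (hm2 : 2 ≤ m)
    (hr : r.Prime) (hrdvd : r ∣ q ^ m - 1)
    (hppd : ∀ i : ℕ, 1 ≤ i → i < m → ¬ r ∣ q ^ i - 1)
    (A : Subgroup (Lˣ ⋊[galUnitsHom K L] (L ≃ₐ[K] L)))
    (hnilp : Group.IsNilpotent ↥A)
    (htrans : ∀ x y : L, x ≠ 0 → y ≠ 0 →
      ∃ g ∈ A, (g.left : L) * g.right x = y) :
    A = (SemidirectProduct.inl :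
          Lˣ →* Lˣ ⋊[galUnitsHom K L] (L ≃ₐ[K] L)).range ∧
    IsCyclic ↥A ∧ Nat.card ↥A = q ^ m - 1 :=
  nilpotent_transitive_eq_units_general q m r hq hm hr hrdvd hppd A hnilp htrans
end

section
/- Let q be a Mersenne prime (a prime such that q + 1 is a power of 2), and let K ⊆ L be finite fields with |K| = q and [L : K] = 2. Then the semidirect product Lˣ ⋊ Gal(L/K), where the Galois group acts naturally on the unit group Lˣ, is a nilpotent group. -/
open Subgroup SemidirectProduct

theorem Group.isNilpotent_of_le_center_of_index_eq_prime_pow {G : Type*} [Group G]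
    {H : Subgroup G} (hH : H ≤ center G) {p n : ℕ} [Fact p.Prime] (hindex : H.index = p ^ n) :
    Group.IsNilpotent G := by
  have hdvd : (center G).index ∣ p ^ n := hindex ▸ index_dvd_of_le hH
  have : (center G).FiniteIndex := ⟨fun h ↦ by simp_all [(Fact.out : p.Prime).ne_zero]⟩
  have hp : IsPGroup p (G ⧸ center G) := IsPGroup.of_card_dvd_pow (by rwa [← index_eq_card])
  exact of_quotient_center_nilpotent hp.isNilpotent

theorem SemidirectProduct.inl_mem_center {N G : Type*} [Group N] [Group G] {φ : G →* MulAut N}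
    {n : N} (hn : n ∈ center N) (hfix : ∀ g, φ g n = n) : inl n ∈ center (N ⋊[φ] G) := by
  refine mem_center_iff.mpr fun x ↦ SemidirectProduct.ext ?_ ?_
  · simp [hfix, mem_center_iff.mp hn]
  · simp

section GammaL1

variable (K L : Type*) [Field K] [Field L] [Algebra K L]

def baseUnits : Subgroup (Lˣ ⋊[galUnitsHom K L] (L ≃ₐ[K] L)) :=
  (Units.map (algebraMap K L : K →* L)).range.map inl

theorem galUnitsHom_units_map_algebraMap (σ : L ≃ₐ[K] L) (x : Kˣ) :
    galUnitsHom K L σ (Units.map (algebraMap K L : K →* L) x) =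
      Units.map (algebraMap K L : K →* L) x :=
  Units.ext (σ.commutes x)

theorem baseUnits_le_center : baseUnits K L ≤ center _ := by
  rintro _ ⟨_, ⟨x, rfl⟩, rfl⟩
  exact inl_mem_center (mem_center_iff.mpr fun _ ↦ mul_comm _ _)
    (galUnitsHom_units_map_algebraMap K L · x)

theorem card_baseUnits [Fintype K] : Nat.card (baseUnits K L) = Fintype.card K - 1 := by
  have hinj : Function.Injective (inl.comp (Units.map (algebraMap K L : K →* L)) :
      Kˣ →* Lˣ ⋊[galUnitsHom K L] (L ≃ₐ[K] L)) :=
    inl_injective.comp (Units.map_injective (algebraMap K L).injective)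
  rw [baseUnits, ← MonoidHom.range_comp,
    Nat.card_congr (MonoidHom.ofInjective hinj).toEquiv.symm, Nat.card_units,
    Nat.card_eq_fintype_card]

theorem card_gammaL1 [Fintype K] [Fintype L] :
    Nat.card (Lˣ ⋊[galUnitsHom K L] (L ≃ₐ[K] L)) =
      (Fintype.card K ^ Module.finrank K L - 1) * Module.finrank K L := by
  rw [SemidirectProduct.card, Nat.card_units, IsGalois.card_aut_eq_finrank,
    Nat.card_eq_fintype_card, Module.card_eq_pow_finrank (K := K) (V := L)]

theorem index_baseUnits_of_finrank_eq_two [Fintype K] [Fintype L]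
    (hdeg : Module.finrank K L = 2) : (baseUnits K L).index = (Fintype.card K + 1) * 2 := by
  have hcard := card_mul_index (baseUnits K L)
  have hfactor : Fintype.card K ^ 2 - 1 = (Fintype.card K + 1) * (Fintype.card K - 1) := by
    simpa using Nat.sq_sub_sq (Fintype.card K) 1
  rw [card_baseUnits, card_gammaL1, hdeg, hfactor, mul_comm _ (Fintype.card K - 1),
    mul_assoc] at hcard
  exact Nat.eq_of_mul_eq_mul_left (by have := Fintype.one_lt_card (α := K); omega) hcard

end GammaL1

theorem gammaL1_nilpotent_of_mersenne_general {K L : Type*} [Field K] [Field L]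
    [Algebra K L] [Fintype K] [Fintype L] (q : ℕ)
    (hq : Fintype.card K = q) (hmersenne : ∃ k : ℕ, q + 1 = 2 ^ k)
    (hdeg : Module.finrank K L = 2) :
    Group.IsNilpotent (Lˣ ⋊[galUnitsHom K L] (L ≃ₐ[K] L)) := by
  obtain ⟨k, hk⟩ := hmersenne
  refine Group.isNilpotent_of_le_center_of_index_eq_prime_pow (baseUnits_le_center K L)
    (p := 2) (n := k + 1) ?_
  rw [index_baseUnits_of_finrank_eq_two K L hdeg, hq, hk, pow_succ]

/-- If `q` is a Mersenne prime and `L/K` is a degree-2 extension of finite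
fields with `|K| = q`, then `ΓL₁(q²) = Lˣ ⋊ Gal(L/K)` is nilpotent. -/
theorem gammaL1_nilpotent_of_mersenne {K L : Type*} [Field K] [Field L]
    [Algebra K L] [Fintype K] [Fintype L] (q : ℕ)
    (hq : Fintype.card K = q) (hprime : q.Prime) (hmersenne : ∃ k : ℕ, q + 1 = 2 ^ k)
    (hdeg : Module.finrank K L = 2) :
    Group.IsNilpotent (Lˣ ⋊[galUnitsHom K L] (L ≃ₐ[K] L)) :=
  gammaL1_nilpotent_of_mersenne_general q hq hmersenne hdeg
end

section
/- Let q be a Mersenne prime (a prime such that q + 1 is a power of 2), and let K ⊆ L be finite fields with |K| = q and [L : K] = 2. Let G = Lˣ ⋊ Gal(L/K), acting on L by (a, σ)·x = a·σ(x). Then there exists a nilpotent subgroup A of G which is not contained in the image of Lˣ (the canonical copy of Lˣ in G) and which acts simply transitively on L \ {0}: for all nonzero x, y ∈ L there exists a unique (a, σ) ∈ A with a·σ(x) = y. Moreover A has order q² − 1. -/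
/-! The quadratic character `χ` of `L` is invariant under `Gal(L/K)`, so together with the
isomorphism `ε : Gal(L/K) ≃* ℤˣ` it defines a homomorphism `(a, σ) ↦ χ(a) ε(σ)` from
`ΓL₁(q²) = Lˣ ⋊ Gal(L/K)` to `ℤˣ`; its kernel `A` is the subgroup. For nonzero `x, y` an
element `(a, σ)` with `a σ(x) = y` has `a = y / σ(x)` and `χ(a) = χ(y) / χ(x)`, so lying in
`A` forces `ε(σ) = χ(x) / χ(y)`, which determines `σ`: the action of `A` on `Lˣ` is regular.
The image of `Kˣ` is central in `ΓL₁(q²)` because `Gal(L/K)` fixes `K`, and its index is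
`2(q² - 1)/(q - 1) = 2(q + 1)`, a power of `2` when `q + 1` is. So `ΓL₁(q²)` itself is
nilpotent, and so is `A`. -/

namespace SemidirectProduct

variable {N G H : Type*} [Group N] [Group G] [CommGroup H] {φ : G →* MulAut N}

theorem map_inl_aut (f : N ⋊[φ] G →* H) (g : G) (n : N) : f (inl (φ g n)) = f (inl n) := by
  rw [inl_aut, map_mul, map_mul, map_inv, map_inv, mul_inv_cancel_comm]

theorem mk_mem_ker_iff (f : N ⋊[φ] G →* H) (n : N) (g : G) :
    (⟨n, g⟩ : N ⋊[φ] G) ∈ f.ker ↔ f (inr g) = (f (inl n))⁻¹ := by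
  rw [MonoidHom.mem_ker, mk_eq_inl_mul_inr, map_mul, mul_eq_one_iff_eq_inv']

theorem existsUnique_mem_ker_left_mul_eq (f : N ⋊[φ] G →* H)
    (hf : Function.Bijective (f.comp inr)) (u v : N) :
    ∃! g : f.ker, (g : N ⋊[φ] G).left * φ (g : N ⋊[φ] G).right u = v := by
  have hmem (g : G) : (⟨v * (φ g u)⁻¹, g⟩ : N ⋊[φ] G) ∈ f.ker ↔
      f (inr g) = f (inl u) * (f (inl v))⁻¹ := by
    rw [mk_mem_ker_iff, map_mul, map_inv, map_mul, map_inv, map_inl_aut, mul_inv, inv_inv, mul_comm]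
  obtain ⟨τ, hτ⟩ := hf.surjective (f (inl u) * (f (inl v))⁻¹)
  refine ⟨⟨_, (hmem τ).2 hτ⟩, inv_mul_cancel_right v _, ?_⟩
  rintro ⟨g, hg⟩ hgv
  have hg' : g = ⟨v * (φ g.right u)⁻¹, g.right⟩ := by
    ext <;> simp [← hgv]
  have hgτ : g.right = τ := hf.injective (((hmem _).1 (hg' ▸ hg)).trans hτ.symm)
  exact Subtype.ext (hg'.trans (by rw [hgτ]))

theorem bijective_left_of_bijective_comp_inr (f : N ⋊[φ] G →* H)
    (hf : Function.Bijective (f.comp inr)) :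
    Function.Bijective fun g : f.ker => (g : N ⋊[φ] G).left := by
  refine Function.bijective_iff_existsUnique _ |>.2 fun v => ?_
  simpa using existsUnique_mem_ker_left_mul_eq f hf 1 v

theorem not_ker_le_range_inl (f : N ⋊[φ] G →* H) (hinl : Function.Surjective (f.comp inl))
    [Nontrivial G] : ¬ f.ker ≤ (inl : N →* N ⋊[φ] G).range := by
  obtain ⟨g, hg⟩ := exists_ne (1 : G)
  obtain ⟨n, hn⟩ := hinl (f (inr g))⁻¹
  intro hle
  have := hle ((mk_mem_ker_iff f n g).2 (inv_eq_iff_eq_inv.1 hn.symm))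
  rw [range_inl_eq_ker_rightHom, MonoidHom.mem_ker, rightHom_eq_right] at this
  exact hg this

theorem inl_mem_center_s10 {N : Type*} [CommGroup N] {φ : G →* MulAut N} {n : N}
    (hn : ∀ g, φ g n = n) :
    inl n ∈ Subgroup.center (N ⋊[φ] G) := by
  rw [Subgroup.mem_center_iff]
  intro g
  ext
  · simp [hn, mul_comm]
  · simp

end SemidirectProduct

theorem Group.isNilpotent_of_card_eq_pow_mul_card {G : Type*} [Group G] [Finite G] {p n : ℕ}
    [Fact p.Prime] {Z : Subgroup G} (hZ : Z ≤ Subgroup.center G)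
    (hcard : Nat.card G = p ^ n * Nat.card Z) : Group.IsNilpotent G := by
  have : Z.Normal :=
    ⟨fun z hz g => by rwa [Subgroup.mem_center_iff.mp (hZ hz) g, mul_inv_cancel_right]⟩
  have hquot : Nat.card (G ⧸ Z) = p ^ n := by
    have := Z.card_eq_card_quotient_mul_card_subgroup
    rw [hcard] at this
    exact (Nat.eq_of_mul_eq_mul_right Nat.card_pos this).symm
  have := (IsPGroup.of_card hquot).isNilpotent
  exact Subgroup.isNilpotent_of_ker_le_center (QuotientGroup.mk' Z) (by rwa [QuotientGroup.ker_mk'])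

theorem quadraticChar_map_ringEquiv {F : Type*} [Field F] [Fintype F] [DecidableEq F]
    (τ : F ≃+* F) (a : F) : quadraticChar F (τ a) = quadraticChar F a := by
  have hsq : IsSquare (τ a) ↔ IsSquare a :=
    ⟨fun h => by simpa using h.map τ.symm, fun h => h.map τ⟩
  simp only [quadraticChar_apply, quadraticCharFun, map_eq_zero_iff τ τ.injective, hsq]

theorem quadraticChar_toUnitHom_surjective {F : Type*} [Field F] [Fintype F] [DecidableEq F]
    (hF : ringChar F ≠ 2) : Function.Surjective (quadraticChar F).toUnitHom := by
  intro s
  rcases Int.units_eq_one_or s with rfl | rfl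
  · exact ⟨1, map_one _⟩
  · obtain ⟨a, ha⟩ := quadraticChar_exists_neg_one' hF
    exact ⟨a, Units.ext ha⟩

section GammaL

variable {K L : Type*} [Field K] [Field L] [Algebra K L]

@[simp]
theorem coe_galUnitsHom_apply (σ : L ≃ₐ[K] L) (u : Lˣ) :
    ((galUnitsHom K L σ u : Lˣ) : L) = σ u :=
  rfl

noncomputable def quadraticCharLift [Fintype L] [DecidableEq L] (e : (L ≃ₐ[K] L) ≃* ℤˣ) :
    Lˣ ⋊[galUnitsHom K L] (L ≃ₐ[K] L) →* ℤˣ :=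
  SemidirectProduct.lift (quadraticChar L).toUnitHom e.toMonoidHom fun σ => by
    ext u
    simp only [MonoidHom.comp_apply, MulEquiv.coe_toMonoidHom, MulAut.conj_apply,
      mul_inv_cancel_comm]
    exact quadraticChar_map_ringEquiv σ.toRingEquiv u

theorem quadraticCharLift_comp_inl [Fintype L] [DecidableEq L] (e : (L ≃ₐ[K] L) ≃* ℤˣ) :
    (quadraticCharLift e).comp SemidirectProduct.inl = (quadraticChar L).toUnitHom :=
  SemidirectProduct.lift_comp_inl ..

theorem quadraticCharLift_comp_inr [Fintype L] [DecidableEq L] (e : (L ≃ₐ[K] L) ≃* ℤˣ) :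
    (quadraticCharLift e).comp SemidirectProduct.inr = e.toMonoidHom :=
  SemidirectProduct.lift_comp_inr ..

theorem card_units_of_finrank_eq_two [Fintype K] [Fintype L] (hdeg : Module.finrank K L = 2) :
    Nat.card Lˣ = Fintype.card K ^ 2 - 1 := by
  rw [Nat.card_units, Nat.card_eq_fintype_card, Module.card_eq_pow_finrank (K := K), hdeg]

theorem card_algEquiv_of_finrank_eq_two [Fintype K] [Fintype L] (hdeg : Module.finrank K L = 2) :
    Nat.card (L ≃ₐ[K] L) = 2 := by
  have : Module.Finite K L := Module.Finite.of_finite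
  rw [IsGalois.card_aut_eq_finrank, hdeg]

theorem ringChar_ne_two_of_card_add_one_eq_two_pow [Fintype K] {k : ℕ}
    (hk : Fintype.card K + 1 = 2 ^ k) : ringChar L ≠ 2 := by
  rw [← Algebra.ringChar_eq K L]
  intro h
  have heven := FiniteField.even_card_of_char_two h
  have hk0 : k ≠ 0 := by
    rintro rfl
    exact Fintype.card_ne_zero (α := K) (by omega)
  have := dvd_pow_self 2 hk0
  omega

theorem isNilpotent_gammaL_of_card_add_one_eq_two_pow [Fintype K] [Fintype L]
    (hdeg : Module.finrank K L = 2) {k : ℕ} (hk : Fintype.card K + 1 = 2 ^ k) :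
    Group.IsNilpotent (Lˣ ⋊[galUnitsHom K L] (L ≃ₐ[K] L)) := by
  have : Finite (Lˣ ⋊[galUnitsHom K L] (L ≃ₐ[K] L)) :=
    Finite.of_equiv (Lˣ × (L ≃ₐ[K] L)) SemidirectProduct.equivProd.symm
  let ι := (SemidirectProduct.inl (φ := galUnitsHom K L)).comp
    (Units.map (algebraMap K L : K →* L))
  have hι : Function.Injective ι :=
    SemidirectProduct.inl_injective.comp (Units.map_injective (algebraMap K L).injective)
  let Z := ι.range
  have hZ : Z ≤ Subgroup.center _ := by
    rintro _ ⟨c, rfl⟩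
    exact SemidirectProduct.inl_mem_center_s10 fun σ => Units.ext (σ.commutes c)
  have hcardZ : Nat.card Z = Fintype.card K - 1 := by
    rw [← Nat.card_congr (MonoidHom.ofInjective hι).toEquiv, Nat.card_units,
      Nat.card_eq_fintype_card]
  refine Group.isNilpotent_of_card_eq_pow_mul_card (p := 2) (n := k + 1) hZ ?_
  rw [Nat.card_congr SemidirectProduct.equivProd, Nat.card_prod, card_units_of_finrank_eq_two hdeg,
    card_algEquiv_of_finrank_eq_two hdeg, hcardZ, pow_succ 2 k, ← hk]
  have hq : 1 ≤ Fintype.card K := Fintype.card_pos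
  zify [hq, Nat.one_le_pow _ _ hq]
  ring

end GammaL

theorem exists_nilpotent_regular_subgroup_of_mersenne_general {K L : Type*} [Field K]
    [Field L] [Algebra K L] [Fintype K] [Fintype L] (q : ℕ)
    (hq : Fintype.card K = q)
    (hmersenne : ∃ k : ℕ, q + 1 = 2 ^ k)
    (hdeg : Module.finrank K L = 2) :
    ∃ A : Subgroup (Lˣ ⋊[galUnitsHom K L] (L ≃ₐ[K] L)),
      Group.IsNilpotent ↥A ∧
      ¬ A ≤ (SemidirectProduct.inl :
              Lˣ →* Lˣ ⋊[galUnitsHom K L] (L ≃ₐ[K] L)).range ∧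
      (∀ x y : L, x ≠ 0 → y ≠ 0 →
        ∃! g : ↥A, ((g : Lˣ ⋊[galUnitsHom K L] (L ≃ₐ[K] L)).left : L) *
            (g : Lˣ ⋊[galUnitsHom K L] (L ≃ₐ[K] L)).right x = y) ∧
      Nat.card ↥A = q ^ 2 - 1 := by
  classical
  subst hq
  obtain ⟨k, hk⟩ := hmersenne
  have : Nontrivial (L ≃ₐ[K] L) :=
    Finite.one_lt_card_iff_nontrivial.1 (by rw [card_algEquiv_of_finrank_eq_two hdeg]; norm_num)
  let e : (L ≃ₐ[K] L) ≃* ℤˣ := mulEquivOfPrimeCardEq (card_algEquiv_of_finrank_eq_two hdeg)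
    (by rw [Nat.card_eq_fintype_card, Fintype.card_units_int])
  let f := quadraticCharLift e
  have hf : Function.Bijective (f.comp SemidirectProduct.inr) := by
    rw [quadraticCharLift_comp_inr]
    exact e.bijective
  have := isNilpotent_gammaL_of_card_add_one_eq_two_pow hdeg hk
  refine ⟨f.ker, inferInstance, SemidirectProduct.not_ker_le_range_inl f ?_,
    fun x y hx hy => ?_, ?_⟩
  · rw [quadraticCharLift_comp_inl]
    exact quadraticChar_toUnitHom_surjective (ringChar_ne_two_of_card_add_one_eq_two_pow hk)
  · refine (existsUnique_congr fun g => ?_).1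
      (SemidirectProduct.existsUnique_mem_ker_left_mul_eq f hf (Units.mk0 x hx) (Units.mk0 y hy))
    simp only [Units.ext_iff, Units.val_mul, coe_galUnitsHom_apply, Units.val_mk0]
  · rw [Nat.card_eq_of_bijective _ (SemidirectProduct.bijective_left_of_bijective_comp_inr f hf),
      card_units_of_finrank_eq_two hdeg]

/-- If `q` is a Mersenne prime and `L/K` is a degree-2 extension of finite
fields with `|K| = q`, then `ΓL₁(q²) = Lˣ ⋊ Gal(L/K)` has a nilpotent subgroup
`A` of order `q² - 1`, not contained in the canonical copy of `Lˣ`, which acts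
simply transitively on `L \ {0}`. -/
theorem exists_nilpotent_regular_subgroup_of_mersenne {K L : Type*} [Field K]
    [Field L] [Algebra K L] [Fintype K] [Fintype L] (q : ℕ)
    (hq : Fintype.card K = q) (hprime : q.Prime)
    (hmersenne : ∃ k : ℕ, q + 1 = 2 ^ k)
    (hdeg : Module.finrank K L = 2) :
    ∃ A : Subgroup (Lˣ ⋊[galUnitsHom K L] (L ≃ₐ[K] L)),
      Group.IsNilpotent ↥A ∧
      ¬ A ≤ (SemidirectProduct.inl :
              Lˣ →* Lˣ ⋊[galUnitsHom K L] (L ≃ₐ[K] L)).range ∧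
      (∀ x y : L, x ≠ 0 → y ≠ 0 →
        ∃! g : ↥A, ((g : Lˣ ⋊[galUnitsHom K L] (L ≃ₐ[K] L)).left : L) *
            (g : Lˣ ⋊[galUnitsHom K L] (L ≃ₐ[K] L)).right x = y) ∧
      Nat.card ↥A = q ^ 2 - 1 :=
  exists_nilpotent_regular_subgroup_of_mersenne_general q hq hmersenne hdeg
end
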